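/- arXiv:1307.0177 — 3 statements merged into one kernel-verified Lean document; each statement's English description precedes it below -/
import Mathlib

section
/- Let H be a separable complex Hilbert space, m ≥ 1, I ⊆ [-1/2,1/2]^m a measurable set, and D a countable index set. Suppose g : D × I → H is such that for each η ∈ D the map λ ↦ g_η(λ) is measurable, and for almost every λ ∈ I the family (g_η(λ))_{η∈D} is a Parseval frame for H. For k ∈ ℤ^m and η ∈ D define F_{k,η} ∈ L²(I; H) by F_{k,η}(λ) = e^{2πi⟨k,λ⟩} g_η(λ). Then the family (F_{k,η})_{(k,η) ∈ ℤ^m × D} is a Parseval frame for L²(I; H): for every F ∈ L²(I; H), ∑_{k∈ℤ^m} ∑_{η∈D} |⟨F, F_{k,η}⟩_{L²(I;H)}|² = ‖F‖²_{L²(I;H)}. -/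
/-!
For fixed `η`, the numbers `⟨F, F_{k,η}⟩` are the Fourier coefficients of the scalar function
`λ ↦ ⟨F λ, g_η λ⟩` on `I`, extended by zero to the cube `∏ (-1/2, 1/2]`; up to a null boundary
this cube is a fundamental domain of `ℤ^m`, so Parseval's identity on the torus gives
`∑_k |⟨F, F_{k,η}⟩|² = ∫_I |⟨F λ, g_η λ⟩|²`. Summing over `η` and interchanging sum and
integral, the pointwise Parseval frame property turns the right side into `∫_I ‖F λ‖²`.
-/

open MeasureTheory Matrix Set
open scoped Real

namespace UnitAddTorus

variable {d : Type*} [Fintype d]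

theorem mFourier_coe_apply (n : d → ℤ) (x : d → ℝ) :
    mFourier n (fun i => (x i : UnitAddCircle)) =
      Complex.exp (2 * π * Complex.I * (((fun i => (n i : ℝ)) ⬝ᵥ x : ℝ) : ℂ)) := by
  simp only [mFourier, ContinuousMap.coe_mk, fourier_coe_apply, dotProduct, ← Complex.exp_sum,
    Complex.ofReal_sum, Complex.ofReal_mul, Complex.ofReal_intCast, Finset.mul_sum]
  congr 1
  refine Finset.sum_congr rfl fun i _ => ?_
  simp only [Complex.ofReal_one, div_one]
  ring

theorem hasSum_sq_norm_setIntegral_exp_mul_Ioc (a : d → ℝ) {f : (d → ℝ) → ℂ}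
    (hf : MemLp f 2 (volume.restrict {x | ∀ i, x i ∈ Ioc (a i) (a i + 1)})) :
    HasSum (fun n : d → ℤ => ‖∫ x in {x | ∀ i, x i ∈ Ioc (a i) (a i + 1)},
        Complex.exp (2 * π * Complex.I * (((fun i => (n i : ℝ)) ⬝ᵥ x : ℝ) : ℂ)) * f x‖ ^ 2)
      (∫ x in {x | ∀ i, x i ∈ Ioc (a i) (a i + 1)}, ‖f x‖ ^ 2) := by
  have hbox : MeasurableSet {x : d → ℝ | ∀ i, x i ∈ Ioc (a i) (a i + 1)} :=
    MeasurableSet.univ_pi' fun _ => measurableSet_Ioc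
  set p := fun t => ((measurableEquivPiIoc a t) : d → ℝ)
  -- the torus measure is the Haar probability measure of `UnitAddTorus`, not the global `volume`
  have hp : MeasurePreserving p _ _ :=
    (measurePreserving_subtype_coe hbox).comp (measurePreserving_equivPiIoc a)
  have hemb : MeasurableEmbedding p :=
    (MeasurableEmbedding.subtype_coe hbox).comp (measurableEquivPiIoc a).measurableEmbedding
  have hcoe : ∀ t, (fun i => (p t i : UnitAddCircle)) = t := fun t => by
    ext i; exact AddCircle.coe_equivIoc
  have hf' := hf.comp_measurePreserving hp
  have hcoeff : ∀ n, mFourierCoeff (hf'.toLp _) (-n) =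
      ∫ x in {x | ∀ i, x i ∈ Ioc (a i) (a i + 1)},
        Complex.exp (2 * π * Complex.I * (((fun i => (n i : ℝ)) ⬝ᵥ x : ℝ) : ℂ)) * f x := by
    intro n
    rw [mFourierCoeff, ← hp.integral_comp hemb]
    refine integral_congr_ae ?_
    filter_upwards [hf'.coeFn_toLp] with t ht
    rw [ht, neg_neg, ← mFourier_coe_apply, hcoe, smul_eq_mul, Function.comp_apply]
  have hparseval := hasSum_sq_mFourierCoeff (hf'.toLp (f ∘ p))
  rw [← (Equiv.neg (d → ℤ)).hasSum_iff] at hparseval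
  convert hparseval using 1
  · ext n
    rw [Function.comp_apply, Equiv.neg_apply, hcoeff]
  · rw [← hp.integral_comp hemb]
    refine integral_congr_ae ?_
    filter_upwards [hf'.coeFn_toLp] with t ht
    rw [ht, Function.comp_apply]

theorem hasSum_sq_norm_setIntegral_exp_mul_of_subset_Icc (a : d → ℝ) {J : Set (d → ℝ)}
    (hJ : MeasurableSet J) (hJa : J ⊆ {x | ∀ i, x i ∈ Icc (a i) (a i + 1)}) {f : (d → ℝ) → ℂ}
    (hf : MemLp f 2 (volume.restrict J)) :
    HasSum (fun n : d → ℤ => ‖∫ x in J,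
        Complex.exp (2 * π * Complex.I * (((fun i => (n i : ℝ)) ⬝ᵥ x : ℝ) : ℂ)) * f x‖ ^ 2)
      (∫ x in J, ‖f x‖ ^ 2) := by
  set B := {x : d → ℝ | ∀ i, x i ∈ Ioc (a i) (a i + 1)}
  have hB : B =ᵐ[volume] {x | ∀ i, x i ∈ Icc (a i) (a i + 1)} := by
    have hBpi : B = univ.pi fun i => Ioc (a i) ((a + 1) i) := by ext; simp [B]
    have hIcc : {x : d → ℝ | ∀ i, x i ∈ Icc (a i) (a i + 1)} = Icc a (a + 1) := by
      ext; simp [Pi.le_def, forall_and]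
    rw [hBpi, hIcc, volume_pi]
    exact Measure.univ_pi_Ioc_ae_eq_Icc
  have hJB : (volume.restrict B).restrict J = volume.restrict J := by
    rw [Measure.restrict_restrict hJ]
    refine Measure.restrict_congr_set ?_
    have hJB := (ae_eq_refl J).inter hB
    rwa [inter_eq_left.2 hJa] at hJB
  have hsum := hasSum_sq_norm_setIntegral_exp_mul_Ioc a
    ((memLp_indicator_iff_restrict hJ).2 (hJB ▸ hf))
  convert hsum using 1
  · ext n
    rw [← hJB, ← integral_indicator hJ]
    congr 3
    ext x
    by_cases hx : x ∈ J <;> simp [hx]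
  · rw [← hJB, ← integral_indicator hJ]
    congr 1
    ext x
    by_cases hx : x ∈ J <;> simp [hx]

end UnitAddTorus

theorem hasSum_sq_norm_inner_of_tsum_eq {𝕜 H D : Type*} [RCLike 𝕜] [NormedAddCommGroup H]
    [InnerProductSpace 𝕜 H] {e : D → H} (he : ∀ f : H, ∑' i, ‖(inner 𝕜 f (e i) : 𝕜)‖ ^ 2 = ‖f‖ ^ 2)
    (f : H) : HasSum (fun i => ‖(inner 𝕜 f (e i) : 𝕜)‖ ^ 2) (‖f‖ ^ 2) := by
  have hsum : Summable fun i => ‖(inner 𝕜 f (e i) : 𝕜)‖ ^ 2 := by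
    -- a non-summable family has `tsum` zero, which forces `f = 0`
    by_contra hns
    have hf : f = 0 := by simpa [tsum_eq_zero_of_not_summable hns, eq_comm] using he f
    exact hns (by simp [hf])
  exact he f ▸ hsum.hasSum

theorem MeasureTheory.hasSum_integral_of_hasSum_of_nonneg {α ι : Type*} [MeasurableSpace α]
    {μ : Measure α} [Countable ι] {f : ι → α → ℝ} {g : α → ℝ}
    (hf : ∀ i, AEStronglyMeasurable (f i) μ) (hf0 : ∀ i, 0 ≤ᵐ[μ] f i) (hg : Integrable g μ)
    (hfg : ∀ᵐ x ∂μ, HasSum (fun i => f i x) (g x)) :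
    HasSum (fun i => ∫ x, f i x ∂μ) (∫ x, g x ∂μ) :=
  hasSum_integral_of_dominated_convergence f hf
    (fun i => (hf0 i).mono fun _ hx => (Real.norm_of_nonneg hx).le)
    (hfg.mono fun _ hx => hx.summable)
    (hg.congr (hfg.mono fun _ hx => hx.tsum_eq.symm)) hfg

theorem tsum_tsum_eq_of_hasSum_of_nonneg {ι κ : Type*} {x : ι → κ → ℝ} {s : κ → ℝ} {t : ℝ}
    (hx : ∀ i j, 0 ≤ x i j) (hcol : ∀ j, HasSum (fun i => x i j) (s j)) (hs : HasSum s t) :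
    ∑' i, ∑' j, x i j = t := by
  have hsum : Summable (Function.uncurry fun j i => x i j) :=
    (summable_prod_of_nonneg fun _ => hx _ _).2
      ⟨fun j => (hcol j).summable, by simpa only [(hcol _).tsum_eq] using hs.summable⟩
  rw [hsum.tsum_comm]
  simpa only [(hcol _).tsum_eq] using hs.tsum_eq

theorem modulated_fields_parseval_frame_general
    {H : Type*} [NormedAddCommGroup H] [InnerProductSpace ℂ H]
    (m : ℕ) (I : Set (Fin m → ℝ)) (hI : MeasurableSet I)
    (hIcube : I ⊆ {lam : Fin m → ℝ | ∀ i, lam i ∈ Set.Icc (-(1/2) : ℝ) (1/2)})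
    {D : Type*} [Countable D]
    (g : D → (Fin m → ℝ) → H)
    (hgmeas : ∀ η : D, StronglyMeasurable (g η))
    (hPar : ∀ᵐ lam ∂(volume.restrict I),
      ∀ f : H, ∑' η : D, ‖(inner ℂ f (g η lam) : ℂ)‖ ^ 2 = ‖f‖ ^ 2)
    (F : (Fin m → ℝ) → H) (hF : MemLp F 2 (volume.restrict I)) :
    ∑' (k : Fin m → ℤ) (η : D),
      ‖∫ lam in I,
          (inner ℂ (F lam)
            (Complex.exp (2 * π * Complex.I * (((fun i => (k i : ℝ)) ⬝ᵥ lam : ℝ) : ℂ)) •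
              g η lam) : ℂ)‖ ^ 2
      = ∫ lam in I, ‖F lam‖ ^ 2 := by
  set h : D → (Fin m → ℝ) → ℂ := fun η lam => inner ℂ (F lam) (g η lam)
  have hframe : ∀ᵐ lam ∂(volume.restrict I), HasSum (fun η => ‖h η lam‖ ^ 2) (‖F lam‖ ^ 2) :=
    hPar.mono fun lam hlam => hasSum_sq_norm_inner_of_tsum_eq hlam (F lam)
  have hmeas : ∀ η, AEStronglyMeasurable (h η) (volume.restrict I) :=
    fun η => hF.1.inner (hgmeas η).aestronglyMeasurable
  have hmem : ∀ η, MemLp (h η) 2 (volume.restrict I) := fun η =>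
    hF.mono (hmeas η) <| hframe.mono fun lam hlam =>
      (pow_le_pow_iff_left₀ (norm_nonneg _) (norm_nonneg _) two_ne_zero).1
        (le_hasSum hlam η fun _ _ => sq_nonneg _)
  have hIcube' : I ⊆ {lam | ∀ i, lam i ∈ Icc (-(1/2) : ℝ) (-(1/2) + 1)} := by
    norm_num at hIcube ⊢
    exact hIcube
  simp only [inner_smul_right]
  exact tsum_tsum_eq_of_hasSum_of_nonneg (fun _ _ => sq_nonneg _)
    (fun η => UnitAddTorus.hasSum_sq_norm_setIntegral_exp_mul_of_subset_Icc (fun _ => -(1/2))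
      hI hIcube' (hmem η))
    (hasSum_integral_of_hasSum_of_nonneg (fun η => (hmeas η).norm.pow 2)
      (fun _ => ae_of_all _ fun _ => sq_nonneg _) (hF.integrable_norm_pow two_ne_zero) hframe)

/-- if for a.e. `λ ∈ I ⊆ [-1/2,1/2]^m` the family `(g_η(λ))_{η ∈ D}` is a
Parseval frame for the separable complex Hilbert space `H`, then the modulated family
`F_{k,η}(λ) = e^{2πi⟨k,λ⟩} g_η(λ)`, `(k,η) ∈ ℤ^m × D`, is a Parseval frame for `L²(I; H)`. -/
theorem modulated_fields_parseval_frame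
    {H : Type*} [NormedAddCommGroup H] [InnerProductSpace ℂ H]
    [CompleteSpace H] [SecondCountableTopology H]
    (m : ℕ) (hm : 1 ≤ m) (I : Set (Fin m → ℝ)) (hI : MeasurableSet I)
    (hIcube : I ⊆ {lam : Fin m → ℝ | ∀ i, lam i ∈ Set.Icc (-(1/2) : ℝ) (1/2)})
    {D : Type*} [Countable D]
    (g : D → (Fin m → ℝ) → H)
    (hgmeas : ∀ η : D, StronglyMeasurable (g η))
    (hPar : ∀ᵐ lam ∂(volume.restrict I),
      ∀ f : H, ∑' η : D, ‖(inner ℂ f (g η lam) : ℂ)‖ ^ 2 = ‖f‖ ^ 2)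
    (F : (Fin m → ℝ) → H) (hF : MemLp F 2 (volume.restrict I)) :
    ∑' (k : Fin m → ℤ) (η : D),
      ‖∫ lam in I,
          (inner ℂ (F lam)
            (Complex.exp (2 * π * Complex.I * (((fun i => (k i : ℝ)) ⬝ᵥ lam : ℝ) : ℂ)) •
              g η lam) : ℂ)‖ ^ 2
      = ∫ lam in I, ‖F lam‖ ^ 2 :=
  modulated_fields_parseval_frame_general m I hI hIcube g hgmeas hPar F hF
end

section
/- Let 𝔫 be a finite-dimensional real Lie algebra and λ : 𝔫 → ℝ a linear functional. Let 𝔭 be a linear subspace of 𝔫 such that [u, w] = 0 for all u, w ∈ 𝔭, let Y_1, …, Y_d ∈ 𝔭, and let X_1, …, X_d ∈ 𝔫 be such that 𝔫 is the internal direct sum of 𝔭 and the span of {X_1, …, X_d} (i.e. 𝔭 + span{X_i} = 𝔫 and 𝔭 ∩ span{X_i} = {0}). Assume the d×d matrix (λ[X_i, Y_j])_{1≤i,j≤d} is invertible. Then for every linear subspace 𝔥 of 𝔫 strictly containing 𝔭 there exist u, w ∈ 𝔥 with λ[u, w] ≠ 0. In particular, 𝔭 is maximal among subspaces (hence among subalgebras)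 𝔥 of 𝔫 satisfying λ[𝔥, 𝔥] = {0}. -/
open Matrix

/-- if `𝔭` is a commutative subspace of a finite-dimensional real Lie algebra
`𝔫`, the `Y i` lie in `𝔭`, `𝔫 = 𝔭 ⊕ span{X i}`, and the matrix `(λ[Xᵢ,Yⱼ])` is invertible,
then every subspace `𝔥` strictly containing `𝔭` contains `u, w` with `λ[u,w] ≠ 0`; i.e. `𝔭`
is maximal among subspaces subordinated to `λ`. -/
theorem polarization_maximal
    {𝔫 : Type*} [LieRing 𝔫] [LieAlgebra ℝ 𝔫] [Module.Finite ℝ 𝔫]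
    (lam : 𝔫 →ₗ[ℝ] ℝ) (𝔭 : Submodule ℝ 𝔫)
    (hcomm : ∀ u ∈ 𝔭, ∀ w ∈ 𝔭, ⁅u, w⁆ = (0 : 𝔫))
    (d : ℕ) (Y : Fin d → 𝔫) (hY : ∀ i, Y i ∈ 𝔭) (X : Fin d → 𝔫)
    (hsup : 𝔭 ⊔ Submodule.span ℝ (Set.range X) = ⊤)
    (hinf : 𝔭 ⊓ Submodule.span ℝ (Set.range X) = ⊥)
    (hdet : IsUnit (Matrix.of fun i j : Fin d => lam ⁅X i, Y j⁆)) :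
    ∀ 𝔥 : Submodule ℝ 𝔫, 𝔭 < 𝔥 → ∃ u ∈ 𝔥, ∃ w ∈ 𝔥, lam ⁅u, w⁆ ≠ 0 := by
  intro 𝔥 hlt
  -- pick h ∈ 𝔥 \ 𝔭
  obtain ⟨h, hh𝔥, hh𝔭⟩ := SetLike.exists_of_lt hlt
  -- decompose h = p + x with p ∈ 𝔭, x ∈ span X
  have hmem : h ∈ 𝔭 ⊔ Submodule.span ℝ (Set.range X) := by
    rw [hsup]; trivial
  obtain ⟨p, hp, x, hx, hpx⟩ := Submodule.mem_sup.mp hmem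
  obtain ⟨c, hc⟩ := (Submodule.mem_span_range_iff_exists_fun ℝ).mp hx
  -- c ≠ 0 since otherwise h = p ∈ 𝔭
  have hcne : c ≠ 0 := by
    intro h0
    apply hh𝔭
    have : x = 0 := by
      rw [← hc, h0]; simp
    rw [← hpx, this, add_zero]; exact hp
  -- the matrix
  set M : Matrix (Fin d) (Fin d) ℝ := Matrix.of fun i j : Fin d => lam ⁅X i, Y j⁆ with hM
  have hdet' : IsUnit M.det := (Matrix.isUnit_iff_isUnit_det M).mp hdet
  have hvm : c ᵥ* M ≠ 0 := by
    intro h0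
    apply hcne
    have := congrArg (fun v => v ᵥ* M⁻¹) h0
    simpa [Matrix.vecMul_vecMul, Matrix.mul_nonsing_inv M hdet'] using this
  obtain ⟨j, hj⟩ := Function.ne_iff.mp hvm
  refine ⟨h, hh𝔥, Y j, hlt.le (hY j), ?_⟩
  have hpY : ⁅p, Y j⁆ = 0 := hcomm p hp (Y j) (hY j)
  have hbrack : ⁅h, Y j⁆ = ∑ i, c i • ⁅X i, Y j⁆ := by
    let f : 𝔫 →ₗ[ℝ] 𝔫 :=
      { toFun := fun v => ⁅v, Y j⁆
        map_add' := fun a b => add_lie a b (Y j)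
        map_smul' := fun r a => smul_lie r a (Y j) }
    have hf : ∀ v, ⁅v, Y j⁆ = f v := fun v => rfl
    rw [← hpx, add_lie, hpY, zero_add, ← hc, hf, map_sum]
    simp [f]
  have : lam ⁅h, Y j⁆ = (c ᵥ* M) j := by
    rw [hbrack, map_sum]
    simp [Matrix.vecMul, dotProduct, hM, mul_comm]
  rw [this]
  simpa using hj
end

section
/- Let d ≥ 1, let S be a d×d real matrix and X a strictly upper triangular d×d real matrix, and let v : ℝ^d → ℂ. For m, l ∈ ℤ^d define π_{m,l} v : ℝ^d → ℂ by (π_{m,l} v)(x) = exp(−2πi( ∑_{j=1}^d ∑_{k=1}^d x_k l_j S_{kj} + ∑_{j=2}^d ∑_{r=1}^{j−1} m_j x_r X_{rj} )) · v(x − m). Let B be the 2d×2d block matrix B = [[1_d, 0_d],[−X, −S]]. Then for every m, l ∈ ℤ^d one has (π_{m,l} v)(x) = e^{2πi⟨w, x⟩} v(x − n) where (n, w) = B(m, l) ∈ ℝ^d × ℝ^d; consequently the set {π_{m,l} v : (m,l) ∈ ℤ^d × ℤ^d} equals the Gabor system G(v, Bℤ^{2d}) = { x ↦ e^{2πi⟨w,x⟩}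 v(x − n) : (n, w) ∈ Bℤ^{2d} }, and moreover |det B| = |det S|. -/
open Matrix
open scoped Real

/-- The action of the discrete set `Γ₁` in the irreducible representation `π_λ`:
`(π_{m,l} v)(x) = exp(-2πi(∑_{j,k} x_k l_j S_{kj} + ∑_j ∑_{r<j} m_j x_r X_{rj})) v(x-m)`. -/
noncomputable def piRep {d : ℕ} (S X : Matrix (Fin d) (Fin d) ℝ)
    (v : (Fin d → ℝ) → ℂ) (m l : Fin d → ℤ) : (Fin d → ℝ) → ℂ :=
  fun x =>
    Complex.exp (-(2 * π * Complex.I) *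
      (((∑ j, ∑ k, x k * (l j : ℝ) * S k j +
          ∑ j, ∑ r ∈ Finset.univ.filter (fun r => r < j), (m j : ℝ) * x r * X r j) : ℝ) : ℂ)) *
    v (x - fun i => (m i : ℝ))

/-- The block matrix `B = [[1_d, 0_d], [-X, -S]]` of the Gabor lattice. -/
def gaborMatrix {d : ℕ} (S X : Matrix (Fin d) (Fin d) ℝ) :
    Matrix (Fin d ⊕ Fin d) (Fin d ⊕ Fin d) ℝ :=
  Matrix.fromBlocks 1 0 (-X) (-S)

lemma phase_eq {d : ℕ} (S X : Matrix (Fin d) (Fin d) ℝ)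
    (hX : ∀ i j : Fin d, ¬ i < j → X i j = 0) (m l : Fin d → ℤ) (x : Fin d → ℝ) :
    -(∑ j, ∑ k, x k * (l j : ℝ) * S k j +
        ∑ j, ∑ r ∈ Finset.univ.filter (fun r => r < j), (m j : ℝ) * x r * X r j) =
      (-(X.mulVec (fun i => (m i : ℝ)) + S.mulVec (fun i => (l i : ℝ)))) ⬝ᵥ x := by
  have h2 : (∑ j, ∑ r ∈ Finset.univ.filter (fun r => r < j), (m j : ℝ) * x r * X r j)
      = ∑ j, ∑ r, (m j : ℝ) * x r * X r j := by
    refine Finset.sum_congr rfl fun j _ => ?_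
    rw [Finset.sum_filter]
    refine Finset.sum_congr rfl fun r _ => ?_
    by_cases h : r < j
    · simp [h]
    · simp [h, hX r j h]
  rw [h2, Finset.sum_comm (f := fun j k => x k * (l j : ℝ) * S k j),
    Finset.sum_comm (f := fun j r => (m j : ℝ) * x r * X r j)]
  simp only [dotProduct, mulVec, dotProduct, Pi.neg_apply, Pi.add_apply,
    ← Finset.sum_add_distrib, ← Finset.sum_neg_distrib]
  refine Finset.sum_congr rfl fun k _ => ?_
  rw [Finset.sum_mul]
  refine Finset.sum_congr rfl fun j _ => ?_
  ring

/-- the orbit `{π_{m,l} v}` is the Gabor system `G(v, Bℤ^{2d})` attached to the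
block matrix `B = [[1,0],[-X,-S]]`, and `|det B| = |det S|`. -/
theorem piRep_eq_gabor (d : ℕ) (hd : 1 ≤ d)
    (S X : Matrix (Fin d) (Fin d) ℝ) (hX : ∀ i j : Fin d, ¬ i < j → X i j = 0)
    (v : (Fin d → ℝ) → ℂ) :
    (∀ m l : Fin d → ℤ, ∀ x : Fin d → ℝ,
      piRep S X v m l x =
        Complex.exp (2 * π * Complex.I *
          ((((-(X.mulVec (fun i => (m i : ℝ)) + S.mulVec (fun i => (l i : ℝ)))) ⬝ᵥ x) : ℝ) : ℂ)) *
        v (x - fun i => (m i : ℝ))) ∧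
    (∀ m l : Fin d → ℤ,
      (gaborMatrix S X).mulVec
          (Sum.elim (fun i => (m i : ℝ)) (fun i => (l i : ℝ))) =
        Sum.elim (fun i => (m i : ℝ))
          (-(X.mulVec (fun i => (m i : ℝ)) + S.mulVec (fun i => (l i : ℝ))))) ∧
    ({g : (Fin d → ℝ) → ℂ | ∃ m l : Fin d → ℤ, g = piRep S X v m l} =
      {g : (Fin d → ℝ) → ℂ | ∃ z : Fin d ⊕ Fin d → ℤ,
        g = fun x =>
          Complex.exp (2 * π * Complex.I *
            (((((gaborMatrix S X).mulVec (fun i => (z i : ℝ)) ∘ Sum.inr) ⬝ᵥ x) : ℝ) : ℂ)) *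
          v (x - ((gaborMatrix S X).mulVec (fun i => (z i : ℝ)) ∘ Sum.inl))}) ∧
    |(gaborMatrix S X).det| = |S.det| := by
  have key : ∀ m l : Fin d → ℤ, ∀ x : Fin d → ℝ,
      piRep S X v m l x =
        Complex.exp (2 * π * Complex.I *
          ((((-(X.mulVec (fun i => (m i : ℝ)) + S.mulVec (fun i => (l i : ℝ)))) ⬝ᵥ x) : ℝ) : ℂ)) *
        v (x - fun i => (m i : ℝ)) := by
    intro m l x
    unfold piRep
    congr 1
    rw [← phase_eq S X hX m l x]
    push_cast
    ring_nf
  have blk : ∀ m l : Fin d → ℤ,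
      (gaborMatrix S X).mulVec
          (Sum.elim (fun i => (m i : ℝ)) (fun i => (l i : ℝ))) =
        Sum.elim (fun i => (m i : ℝ))
          (-(X.mulVec (fun i => (m i : ℝ)) + S.mulVec (fun i => (l i : ℝ)))) := by
    intro m l
    rw [gaborMatrix, Matrix.fromBlocks_mulVec, Matrix.one_mulVec, Matrix.zero_mulVec,
      add_zero, neg_mulVec, neg_mulVec, neg_add, Sum.elim_comp_inl, Sum.elim_comp_inr]
  refine ⟨key, blk, ?_, ?_⟩
  · ext g
    constructor
    · rintro ⟨m, l, rfl⟩
      refine ⟨Sum.elim m l, ?_⟩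
      have hz : (fun i => ((Sum.elim m l i : ℤ) : ℝ)) =
          Sum.elim (fun i => (m i : ℝ)) (fun i => (l i : ℝ)) := by
        funext i; cases i <;> rfl
      funext x
      rw [key m l x, hz, blk m l]
      simp
    · rintro ⟨z, rfl⟩
      refine ⟨fun i => z (Sum.inl i), fun i => z (Sum.inr i), ?_⟩
      have hz : (fun i => (z i : ℝ)) =
          Sum.elim (fun i => ((z (Sum.inl i) : ℤ) : ℝ)) (fun i => ((z (Sum.inr i) : ℤ) : ℝ)) := by
        funext i; cases i <;> rfl
      funext x
      rw [key, hz, blk]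
      simp
  · rw [gaborMatrix, Matrix.det_fromBlocks_zero₁₂]
    simp [Matrix.det_neg, abs_mul, abs_pow]
end
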